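/- Let A, B be symmetric n×n real matrices with A positive definite, and let δ > 0 satisfy ‖δ A⁻¹ B‖_op ≤ 1/2. Then there exists c ∈ [-2, 2] such that tr[(A − δB)⁻¹] = tr[A⁻¹] + δ·tr[A⁻¹ B A⁻¹] + c·δ²·tr[A⁻¹ B A⁻¹ B A⁻¹]. -/

import Mathlib

open Matrix

/-- `|B|`: the matrix obtained by replacing each eigenvalue of the symmetric matrix `B`
by its absolute value, realized as the PSD square root of `Bᴴ * B`. -/
noncomputable def matAbs {n : ℕ} (B : Matrix (Fin n) (Fin n) ℝ) : Matrix (Fin n) (Fin n) ℝ :=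
  (Matrix.posSemidef_conjTranspose_mul_self B).1.eigenvectorUnitary.1 *
    diagonal ((↑) ∘ ((Matrix.posSemidef_conjTranspose_mul_self B).1.eigenvalues · |>.sqrt)) *
    (star (Matrix.posSemidef_conjTranspose_mul_self B).1.eigenvectorUnitary : Matrix (Fin n) (Fin n) ℝ)

/-- operator norm (largest singular value) of a matrix. -/
noncomputable def opNorm {n : ℕ} (M : Matrix (Fin n) (Fin n) ℝ) : ℝ :=
  ‖Matrix.toEuclideanCLM (𝕜 := ℝ) M‖

/-!
Write `A⁻¹ = Sᴴ S` and `N = S (δB) Sᴴ`. Then `N` is symmetric with the same nonzero spectrum as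
`δA⁻¹B`, so `σ(N) ⊆ [-1/2, 1/2]`, and `(A - δB)⁻¹ = Sᴴ (1 - N)⁻¹ S`. Functional calculus gives
`(1 - N)⁻¹ = 1 + N + R` with `R = N²(1 - N)⁻¹` and `0 ≤ R ≤ 2N²` in the Loewner order, since
`0 ≤ x²/(1 - x) ≤ 2x²` for `x ≤ 1/2`. Conjugating by `S` and taking traces yields the three
terms, the last with a coefficient in `[0, 2]`.
-/

open scoped MatrixOrder

theorem IsSelfAdjoint.exists_one_sub_mul_eq_one {A : Type*} [Ring A] [StarRing A] [PartialOrder A]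
    [StarOrderedRing A] [Algebra ℝ A] [TopologicalSpace A]
    [ContinuousFunctionalCalculus ℝ A IsSelfAdjoint] {a : A} (ha : IsSelfAdjoint a)
    (hspec : ∀ x ∈ spectrum ℝ a, x ≤ 1 / 2) :
    ∃ r : A, 0 ≤ r ∧ r ≤ (2 : ℝ) • a ^ 2 ∧ (1 - a) * (1 + a + r) = 1 := by
  have hpos : ∀ x ∈ spectrum ℝ a, 1 / 2 ≤ 1 - x := fun x hx => by linarith [hspec x hx]
  have hcont : ContinuousOn (fun x : ℝ => x ^ 2 / (1 - x)) (spectrum ℝ a) :=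
    ContinuousOn.div (by fun_prop) (by fun_prop) fun x hx => by linarith [hpos x hx]
  have hsq : (1 - a) * cfc (fun x : ℝ => x ^ 2 / (1 - x)) a = a ^ 2 := by
    have hsub : 1 - a = cfc (fun x : ℝ => 1 - x) a := by
      rw [cfc_sub .., cfc_const_one ℝ a, cfc_id' ℝ a]
    rw [hsub, ← cfc_pow_id (R := ℝ) a 2, ← cfc_mul ..]
    refine cfc_congr fun x hx => ?_
    have := hpos x hx
    field_simp
  refine ⟨cfc (fun x : ℝ => x ^ 2 / (1 - x)) a, cfc_nonneg fun x hx => ?_, ?_, ?_⟩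
  · exact div_nonneg (sq_nonneg x) (by linarith [hpos x hx])
  · rw [← cfc_pow_id (R := ℝ) a 2, ← cfc_const_mul ..]
    refine cfc_mono fun x hx => ?_
    rw [div_le_iff₀ (by linarith [hpos x hx])]
    nlinarith [hpos x hx, sq_nonneg x]
  · rw [mul_add, hsq]
    noncomm_ring

theorem spectrum_subset_closedBall_opNorm {n : ℕ} (M : Matrix (Fin n) (Fin n) ℝ) :
    spectrum ℝ M ⊆ Metric.closedBall 0 (opNorm M) := by
  rw [← AlgEquiv.spectrum_eq (toEuclideanCLM (n := Fin n) (𝕜 := ℝ)) M]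
  refine (spectrum.subset_closedBall_norm_mul _).trans (Metric.closedBall_subset_closedBall ?_)
  exact mul_le_of_le_one_right (norm_nonneg _) ContinuousLinearMap.norm_id_le

theorem abs_le_opNorm_of_mem_spectrum_mul_mul_star {n : ℕ} (S X : Matrix (Fin n) (Fin n) ℝ)
    {x : ℝ} (hx : x ∈ spectrum ℝ (S * X * star S)) : |x| ≤ opNorm (star S * S * X) := by
  rcases eq_or_ne x 0 with rfl | hx0
  · exact abs_zero.trans_le (norm_nonneg _)
  have hx' : x ∈ spectrum ℝ (star S * (S * X)) \ {0} := by
    rw [← spectrum.nonzero_mul_comm]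
    exact ⟨hx, hx0⟩
  rw [← mul_assoc] at hx'
  simpa using spectrum_subset_closedBall_opNorm _ hx'.1

theorem Matrix.inv_sub_eq_star_mul_mul {ι R : Type*} [Fintype ι] [DecidableEq ι] [CommRing R]
    [StarRing R] {A X S G : Matrix ι ι R} (hA : IsUnit A) (hS : A⁻¹ = star S * S)
    (hG : (1 - S * X * star S) * G = 1) : (A - X)⁻¹ = star S * G * S := by
  have hAA : A * A⁻¹ = 1 := mul_nonsing_inv A ((isUnit_iff_isUnit_det A).mp hA)
  have hfac : (A - X) * star S = A * star S * (1 - S * X * star S) := by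
    calc (A - X) * star S = A * star S - A * (star S * S) * X * star S := by
          rw [← hS, hAA, one_mul, sub_mul]
      _ = A * star S * (1 - S * X * star S) := by noncomm_ring
  refine inv_eq_right_inv ?_
  calc (A - X) * (star S * G * S) = A * star S * ((1 - S * X * star S) * G) * S := by
        simp only [← mul_assoc, hfac]
    _ = 1 := by rw [hG, mul_one, mul_assoc, ← hS, hAA]

theorem Matrix.trace_le_trace_of_le {ι : Type*} [Fintype ι] {X Y : Matrix ι ι ℝ} (h : X ≤ Y) :
    X.trace ≤ Y.trace := by
  have := (Matrix.le_iff.mp h).trace_nonneg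
  rwa [trace_sub, sub_nonneg] at this

theorem exists_mem_Icc_mul_eq {r t k : ℝ} (hr : 0 ≤ r) (hrt : r ≤ k * t) (hk : 0 ≤ k) :
    ∃ c ∈ Set.Icc 0 k, r = c * t := by
  rcases le_or_gt t 0 with ht | ht
  · exact ⟨0, ⟨le_rfl, hk⟩, by nlinarith⟩
  · exact ⟨r / t, ⟨div_nonneg hr ht.le, (div_le_iff₀ ht).2 hrt⟩, (div_mul_cancel₀ r ht.ne').symm⟩

theorem Matrix.exists_trace_star_mul_mul_eq {ι : Type*} [Fintype ι] {r Y : Matrix ι ι ℝ} {k : ℝ}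
    (hk : 0 ≤ k) (hr : 0 ≤ r) (hrY : r ≤ k • Y) (S : Matrix ι ι ℝ) :
    ∃ c ∈ Set.Icc 0 k, (star S * r * S).trace = c * (star S * Y * S).trace := by
  refine exists_mem_Icc_mul_eq ?_ ?_ hk
  · simpa using trace_le_trace_of_le (star_left_conjugate_le_conjugate hr S)
  · simpa [mul_smul_comm, smul_mul_assoc, trace_smul] using
      trace_le_trace_of_le (star_left_conjugate_le_conjugate hrY S)

theorem trace_inverse_taylor_general {n : ℕ} (A B : Matrix (Fin n) (Fin n) ℝ)
    (hA : A.PosDef) (hB : B.IsSymm) (δ : ℝ)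
    (hop : opNorm (δ • (A⁻¹ * B)) ≤ 1 / 2) :
    ∃ c ∈ Set.Icc (-2 : ℝ) 2,
      ((A - δ • B)⁻¹).trace =
        (A⁻¹).trace + δ * (A⁻¹ * B * A⁻¹).trace
          + c * δ ^ 2 * (A⁻¹ * B * A⁻¹ * B * A⁻¹).trace := by
  obtain ⟨S, hS⟩ : ∃ S, A⁻¹ = star S * S :=
    CStarAlgebra.nonneg_iff_eq_star_mul_self.mp hA.inv.posSemidef.nonneg
  set N := S * (δ • B) * star S with hN
  have hNsa : IsSelfAdjoint N := ((IsSelfAdjoint.all δ).smul hB).conjugate S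
  have hspec : ∀ x ∈ spectrum ℝ N, x ≤ 1 / 2 := fun x hx => by
    have := abs_le_opNorm_of_mem_spectrum_mul_mul_star S (δ • B) hx
    rw [← hS, mul_smul_comm] at this
    linarith [le_abs_self x]
  obtain ⟨r, hr0, hr2, hinv⟩ := hNsa.exists_one_sub_mul_eq_one hspec
  obtain ⟨c, hc, hrc⟩ := exists_trace_star_mul_mul_eq zero_le_two hr0 hr2 S
  have hlin : star S * N * S = δ • (A⁻¹ * B * A⁻¹) := by
    rw [hN, hS]; simp only [mul_assoc, mul_smul_comm, smul_mul_assoc]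
  have hquad : star S * N ^ 2 * S = δ ^ 2 • (A⁻¹ * B * A⁻¹ * B * A⁻¹) := by
    rw [hN, hS, sq, sq δ]; simp only [mul_assoc, mul_smul_comm, smul_mul_assoc, smul_smul]
  refine ⟨c, Set.Icc_subset_Icc (by norm_num) le_rfl hc, ?_⟩
  rw [inv_sub_eq_star_mul_mul hA.isUnit hS hinv, mul_add, mul_add, add_mul, add_mul, trace_add,
    trace_add, mul_one, ← hS, hlin, hrc, hquad, trace_smul, trace_smul, smul_eq_mul, smul_eq_mul]
  ring

theorem trace_inverse_taylor {n : ℕ} (A B : Matrix (Fin n) (Fin n) ℝ)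
    (hA : A.PosDef) (hB : B.IsSymm) (δ : ℝ) (hδ : 0 < δ)
    (hop : opNorm (δ • (A⁻¹ * B)) ≤ 1 / 2) :
    ∃ c ∈ Set.Icc (-2 : ℝ) 2,
      ((A - δ • B)⁻¹).trace =
        (A⁻¹).trace + δ * (A⁻¹ * B * A⁻¹).trace
          + c * δ ^ 2 * (A⁻¹ * B * A⁻¹ * B * A⁻¹).trace :=
  trace_inverse_taylor_general A B hA hB δ hop
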